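/- arXiv:2508.00044 — 3 statements merged into one kernel-verified Lean document; each statement's English description precedes it below -/
import Mathlib

section
/- Let n ≥ 1, let H : EuclideanSpace ℝ (Fin n) × EuclideanSpace ℝ (Fin n) × ℝ → ℝ be a Hamiltonian, and suppose S_J : EuclideanSpace ℝ (Fin n) × ℝ → ℝ is continuously differentiable and satisfies the Hamilton–Jacobi equation ∂S_J/∂t (q,t) + H(q, ∇_q S_J(q,t), t) = 0 for all (q,t). Then the function S_H(q,t;q₀,t₀) := S_J(q,t) − S_J(q₀,t₀) simultaneously satisfies Hamilton's coupled pair of partial differential equations: ∂S_H/∂t (q,t;q₀,t₀) = −H(q, ∇_q S_H(q,t;q₀,t₀), t) and ∂S_H/∂t₀ (q,t;q₀,t₀) = H(q₀, −∇_{q₀} S_H(q,t;q₀,t₀), t₀), for all (q,t,q₀,t₀). -/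
/-!
In `(q, t)` the function `S_H` is `S_J` shifted by a constant, and in `(q₀, t₀)` it is a
constant minus `S_J`. The Hamilton–Jacobi equation for `S_J` thus gives the first equation
directly; in the second, the sign flip turns `−H` into `H` and `∇_{q₀} S_H` into `−∇ S_J`.
-/

section Gradient

variable {𝕜 F : Type*} [RCLike 𝕜] [NormedAddCommGroup F] [InnerProductSpace 𝕜 F]
  [CompleteSpace F]

theorem gradient_sub_const (f : F → 𝕜) (x : F) (c : 𝕜) :
    gradient (fun y => f y - c) x = gradient f x := by
  simp only [gradient, fderiv_sub_const]

theorem gradient_const_sub (f : F → 𝕜) (x : F) (c : 𝕜) :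
    gradient (fun y => c - f y) x = -gradient f x := by
  simp only [gradient, fderiv_const_sub, map_neg]

end Gradient

section HamiltonJacobi

variable {E : Type*} [NormedAddCommGroup E] [InnerProductSpace ℝ E] [CompleteSpace E]
  {H : E × E × ℝ → ℝ} {S : E × ℝ → ℝ}

theorem hamiltonJacobi_sub_const
    (hS : ∀ q t, deriv (fun τ => S (q, τ)) t + H (q, gradient (fun x => S (x, t)) q, t) = 0)
    (c : ℝ) (q : E) (t : ℝ) :
    deriv (fun τ => S (q, τ) - c) t = -H (q, gradient (fun x => S (x, t) - c) q, t) := by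
  rw [deriv_sub_const, gradient_sub_const]
  linarith [hS q t]

theorem hamiltonJacobi_const_sub
    (hS : ∀ q t, deriv (fun τ => S (q, τ)) t + H (q, gradient (fun x => S (x, t)) q, t) = 0)
    (c : ℝ) (q : E) (t : ℝ) :
    deriv (fun τ => c - S (q, τ)) t = H (q, -gradient (fun x => c - S (x, t)) q, t) := by
  rw [deriv_const_sub, gradient_const_sub, neg_neg]
  linarith [hS q t]

end HamiltonJacobi

theorem hamilton_principal_function_satisfies_coupled_PDEs_general
    (n : ℕ)
    (H : EuclideanSpace ℝ (Fin n) × EuclideanSpace ℝ (Fin n) × ℝ → ℝ)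
    (S_J : EuclideanSpace ℝ (Fin n) × ℝ → ℝ)
    (hHJE : ∀ (q : EuclideanSpace ℝ (Fin n)) (t : ℝ),
      deriv (fun τ => S_J (q, τ)) t + H (q, gradient (fun x => S_J (x, t)) q, t) = 0)
    (S_H : EuclideanSpace ℝ (Fin n) → ℝ → EuclideanSpace ℝ (Fin n) → ℝ → ℝ)
    (hS_H : ∀ q t q₀ t₀, S_H q t q₀ t₀ = S_J (q, t) - S_J (q₀, t₀)) :
    (∀ (q : EuclideanSpace ℝ (Fin n)) (t : ℝ) (q₀ : EuclideanSpace ℝ (Fin n)) (t₀ : ℝ),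
        deriv (fun τ => S_H q τ q₀ t₀) t
          = -H (q, gradient (fun x => S_H x t q₀ t₀) q, t)) ∧
    (∀ (q : EuclideanSpace ℝ (Fin n)) (t : ℝ) (q₀ : EuclideanSpace ℝ (Fin n)) (t₀ : ℝ),
        deriv (fun τ₀ => S_H q t q₀ τ₀) t₀
          = H (q₀, -gradient (fun x₀ => S_H q t x₀ t₀) q₀, t₀)) := by
  simp only [hS_H]
  exact ⟨fun q t q₀ t₀ => hamiltonJacobi_sub_const hHJE (S_J (q₀, t₀)) q t,
    fun q t q₀ t₀ => hamiltonJacobi_const_sub hHJE (S_J (q, t)) q₀ t₀⟩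

/-- Hamilton's principal function `S_H(q,t;q₀,t₀) := S_J(q,t) − S_J(q₀,t₀)`, built from a
C¹ solution `S_J` of the Hamilton–Jacobi equation, simultaneously satisfies Hamilton's
coupled pair of partial differential equations. -/
theorem hamilton_principal_function_satisfies_coupled_PDEs
    (n : ℕ) (hn : 1 ≤ n)
    (H : EuclideanSpace ℝ (Fin n) × EuclideanSpace ℝ (Fin n) × ℝ → ℝ)
    (S_J : EuclideanSpace ℝ (Fin n) × ℝ → ℝ)
    (hS_J : ContDiff ℝ 1 S_J)
    (hHJE : ∀ (q : EuclideanSpace ℝ (Fin n)) (t : ℝ),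
      deriv (fun τ => S_J (q, τ)) t + H (q, gradient (fun x => S_J (x, t)) q, t) = 0)
    (S_H : EuclideanSpace ℝ (Fin n) → ℝ → EuclideanSpace ℝ (Fin n) → ℝ → ℝ)
    (hS_H : ∀ q t q₀ t₀, S_H q t q₀ t₀ = S_J (q, t) - S_J (q₀, t₀)) :
    (∀ (q : EuclideanSpace ℝ (Fin n)) (t : ℝ) (q₀ : EuclideanSpace ℝ (Fin n)) (t₀ : ℝ),
        deriv (fun τ => S_H q τ q₀ t₀) t
          = -H (q, gradient (fun x => S_H x t q₀ t₀) q, t)) ∧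
    (∀ (q : EuclideanSpace ℝ (Fin n)) (t : ℝ) (q₀ : EuclideanSpace ℝ (Fin n)) (t₀ : ℝ),
        deriv (fun τ₀ => S_H q t q₀ τ₀) t₀
          = H (q₀, -gradient (fun x₀ => S_H q t x₀ t₀) q₀, t₀)) :=
  hamilton_principal_function_satisfies_coupled_PDEs_general n H S_J hHJE S_H hS_H
end

section
/- Let n ≥ 1, let H : EuclideanSpace ℝ (Fin n) × EuclideanSpace ℝ (Fin n) × ℝ → ℝ be continuously differentiable, and let S : EuclideanSpace ℝ (Fin n) × ℝ → ℝ be twice continuously differentiable and satisfy the Hamilton–Jacobi equation ∂S/∂t (q,t) + H(q, ∇_q S(q,t), t) = 0 for all (q,t). Suppose q : ℝ → EuclideanSpace ℝ (Fin n) is differentiable and solves the characteristic equation q'(t) = ∂H/∂p (q(t), ∇_q S(q(t),t), t) for all t. Then the momentum p(t) := ∇_q S(q(t),t) is differentiable and satisfies p'(t) = −∂H/∂q (q(t), p(t), t) for all t; that is, the pair (q(t), p(t)) solves Hamilton's equations of motion. -/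
/-!
Differentiating `p(t) = ∇_q S(q(t), t)` along the curve gives `p' = ∇²_q S · q' + ∂_t ∇_q S`.
Differentiating the Hamilton–Jacobi equation in `q`, and using the symmetry of the second
derivative of `S` to exchange `∂_t` and `∇_q`, gives `∂_t ∇_q S = -∂H/∂q - ∇²_q S · ∂H/∂p`.
Along a characteristic `q' = ∂H/∂p`, so the two Hessian terms cancel and `p' = -∂H/∂q`.
-/

open ContinuousLinearMap InnerProductSpace
open scoped RealInnerProductSpace

section PartialGradient

variable {E F G : Type*} [NormedAddCommGroup E] [InnerProductSpace ℝ E] [CompleteSpace E]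
  [NormedAddCommGroup F] [NormedSpace ℝ F] [NormedAddCommGroup G] [NormedSpace ℝ G]

theorem inner_gradient_of_hasFDerivAt {f : E → ℝ} {f' : StrongDual ℝ E} {x : E}
    (h : HasFDerivAt f f' x) (v : E) : ⟪gradient f x, v⟫ = f' v := by
  rw [inner_gradient_left, h.fderiv]

theorem inner_gradient_comp_prodMk_left {f : E × F → ℝ} {x : E} {y : F}
    (h : DifferentiableAt ℝ f (x, y)) (v : E) :
    ⟪gradient (fun x' => f (x', y)) x, v⟫ = fderiv ℝ f (x, y) (v, 0) :=
  (inner_gradient_of_hasFDerivAt (h.hasFDerivAt.comp x (hasFDerivAt_prodMk_left x y)) v).trans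
    (by simp)

theorem inner_gradient_comp_prodMk_mid {f : F × E × G → ℝ} {x : F} {y : E} {z : G}
    (h : DifferentiableAt ℝ f (x, y, z)) (v : E) :
    ⟪gradient (fun y' => f (x, y', z)) y, v⟫ = fderiv ℝ f (x, y, z) (0, v, 0) :=
  (inner_gradient_of_hasFDerivAt (h.hasFDerivAt.comp y
    ((hasFDerivAt_prodMk_right x (y, z)).comp y (hasFDerivAt_prodMk_left y z))) v).trans
    (by simp)

theorem deriv_comp_prodMk_right {f : F × ℝ → ℝ} {x : F} {t : ℝ}
    (h : DifferentiableAt ℝ f (x, t)) :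
    deriv (fun τ => f (x, τ)) t = fderiv ℝ f (x, t) (0, 1) :=
  (h.hasFDerivAt.comp t (hasFDerivAt_prodMk_right x t)).hasDerivAt.deriv.trans (by simp)

noncomputable def gradientFst (f : E × F → ℝ) (z : E × F) : E :=
  gradient (fun x => f (x, z.2)) z.1

theorem inner_gradientFst {f : E × F → ℝ} {z : E × F} (h : DifferentiableAt ℝ f z) (v : E) :
    ⟪gradientFst f z, v⟫ = fderiv ℝ f z (v, 0) :=
  inner_gradient_comp_prodMk_left h v

theorem ContDiff.gradientFst {f : E × F → ℝ} {n : WithTop ℕ∞} (hf : ContDiff ℝ (n + 1) f) :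
    ContDiff ℝ n (gradientFst f) := by
  have hrepr : _root_.gradientFst f =
      fun z => (toDual ℝ E).symm ((fderiv ℝ f z).comp (inl ℝ E F)) := by
    funext z
    refine ext_inner_right ℝ fun v => ?_
    rw [inner_gradientFst (hf.differentiable (by simp) z), toDual_symm_apply]
    rfl
  rw [hrepr]
  exact (toDual ℝ E).symm.contDiff.comp ((hf.fderiv_right le_rfl).clm_comp contDiff_const)

theorem inner_fderiv_gradientFst {f : E × F → ℝ} (hf : ContDiff ℝ 2 f) (z w : E × F) (v : E) :
    ⟪fderiv ℝ (gradientFst f) z w, v⟫ = fderiv ℝ (fderiv ℝ f) z w (v, 0) := by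
  have hG : Differentiable ℝ (gradientFst f) :=
    (hf.gradientFst (n := 1)).differentiable one_ne_zero
  have hDf : Differentiable ℝ (fderiv ℝ f) :=
    (hf.fderiv_right (m := 1) le_rfl).differentiable one_ne_zero
  have hid : (fun y => ⟪gradientFst f y, v⟫) = fun y => fderiv ℝ f y (v, 0) :=
    funext fun y => inner_gradientFst (hf.differentiable two_ne_zero y) v
  have := congrArg (fun g => fderiv ℝ g z w) hid
  simpa [fderiv_inner_apply ℝ (hG z) (differentiableAt_const v),
    fderiv_clm_apply (hDf z) (differentiableAt_const _)] using this

end PartialGradient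

section HamiltonJacobi

variable {E : Type*} [NormedAddCommGroup E] [InnerProductSpace ℝ E] [CompleteSpace E]
  {H : E × E × ℝ → ℝ} {S : E × ℝ → ℝ}

theorem fderiv_hamiltonJacobi_apply_eq_zero (hH : Differentiable ℝ H) (hS : ContDiff ℝ 2 S)
    (hHJE : ∀ q t, deriv (fun τ => S (q, τ)) t + H (q, gradientFst S (q, t), t) = 0)
    (z w : E × ℝ) :
    fderiv ℝ (fderiv ℝ S) z w (0, 1)
      + fderiv ℝ H (z.1, gradientFst S z, z.2) (w.1, fderiv ℝ (gradientFst S) z w, w.2) = 0 := by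
  have hG : Differentiable ℝ (gradientFst S) :=
    (hS.gradientFst (n := 1)).differentiable one_ne_zero
  have hDS : Differentiable ℝ (fderiv ℝ S) :=
    (hS.fderiv_right (m := 1) le_rfl).differentiable one_ne_zero
  have hzero : (fun z : E × ℝ => fderiv ℝ S z (0, 1) + H (z.1, gradientFst S z, z.2)) = 0 := by
    funext ⟨q, t⟩
    rw [← deriv_comp_prodMk_right (hS.differentiable two_ne_zero _)]
    exact hHJE q t
  have h : HasFDerivAt (fun z : E × ℝ => fderiv ℝ S z (0, 1) + H (z.1, gradientFst S z, z.2))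
      _ z := ((hDS z).hasFDerivAt.clm_apply (hasFDerivAt_const ((0, 1) : E × ℝ) z)).add
    ((hH _).hasFDerivAt.comp z (hasFDerivAt_fst.prodMk ((hG z).hasFDerivAt.prodMk hasFDerivAt_snd)))
  rw [hzero] at h
  simpa using congrArg (· w) (h.unique (hasFDerivAt_const 0 z))

theorem hasDerivAt_gradientFst_of_characteristic (hH : ContDiff ℝ 1 H) (hS : ContDiff ℝ 2 S)
    (hHJE : ∀ q t, deriv (fun τ => S (q, τ)) t + H (q, gradientFst S (q, t), t) = 0)
    {q : ℝ → E} (hq : Differentiable ℝ q)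
    (hchar : ∀ t, deriv q t = gradient (fun p => H (q t, p, t)) (gradientFst S (q t, t)))
    (t : ℝ) :
    HasDerivAt (fun t => gradientFst S (q t, t))
      (-gradient (fun x => H (x, gradientFst S (q t, t), t)) (q t)) t := by
  set z : E × ℝ := (q t, t)
  set A := fderiv ℝ (fderiv ℝ S) z
  set B := fderiv ℝ H (q t, gradientFst S z, t)
  set G' := fderiv ℝ (gradientFst S) z
  have hHd : Differentiable ℝ H := hH.differentiable one_ne_zero
  have hG : HasFDerivAt (gradientFst S) G' z :=
    ((hS.gradientFst (n := 1)).differentiable one_ne_zero z).hasFDerivAt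
  have hA_symm : ∀ a b, A a b = A b a :=
    hS.contDiffAt.isSymmSndFDerivAt (by simp [minSmoothness_of_isRCLikeNormedField])
  have hB_mid : ∀ u, B (0, u, 0) = ⟪deriv q t, u⟫ := fun u => by
    rw [hchar t, inner_gradient_comp_prodMk_mid (hHd _)]
  refine (hG.comp_hasDerivAt (f := fun s => (q s, s)) t
    ((hq t).hasDerivAt.prodMk (hasDerivAt_id t))).congr_deriv ?_
  refine ext_inner_right ℝ fun v => ?_
  have hHJE_v := fderiv_hamiltonJacobi_apply_eq_zero hHd hS hHJE z (v, 0)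
  calc ⟪G' (deriv q t, 1), v⟫ = A (v, 0) (deriv q t, 0) + A (v, 0) (0, 1) := by
        rw [inner_fderiv_gradientFst hS, hA_symm, ← map_add]; simp
    _ = A (v, 0) (deriv q t, 0) - B (v, 0, 0) - B (0, G' (v, 0), 0) := by
        have hsplit : B (v, G' (v, 0), 0) = B (v, 0, 0) + B (0, G' (v, 0), 0) := by
          rw [← map_add]; simp
        change A (v, 0) (0, 1) + B (v, G' (v, 0), 0) = 0 at hHJE_v
        linarith
    _ = -B (v, 0, 0) := by rw [hB_mid, real_inner_comm, inner_fderiv_gradientFst hS]; ring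
    _ = ⟪-gradient (fun x => H (x, gradientFst S z, t)) (q t), v⟫ := by
        rw [inner_neg_left, inner_gradient_comp_prodMk_left (hHd _)]
        rfl

end HamiltonJacobi

theorem jacobi_characteristics_solve_hamiltons_equations_general
    (n : ℕ)
    (H : EuclideanSpace ℝ (Fin n) × EuclideanSpace ℝ (Fin n) × ℝ → ℝ)
    (hH : ContDiff ℝ 1 H)
    (S : EuclideanSpace ℝ (Fin n) × ℝ → ℝ)
    (hS : ContDiff ℝ 2 S)
    (hHJE : ∀ (q : EuclideanSpace ℝ (Fin n)) (t : ℝ),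
      deriv (fun τ => S (q, τ)) t + H (q, gradient (fun x => S (x, t)) q, t) = 0)
    (q : ℝ → EuclideanSpace ℝ (Fin n))
    (hq : Differentiable ℝ q)
    (hchar : ∀ t : ℝ,
      deriv q t
        = gradient (fun pp => H (q t, pp, t)) (gradient (fun x => S (x, t)) (q t)))
    (p : ℝ → EuclideanSpace ℝ (Fin n))
    (hp : ∀ t : ℝ, p t = gradient (fun x => S (x, t)) (q t)) :
    Differentiable ℝ p ∧
      ∀ t : ℝ, deriv p t = -gradient (fun x => H (x, p t, t)) (q t) := by
  obtain rfl : p = fun t => gradientFst S (q t, t) := funext hp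
  have hp' := hasDerivAt_gradientFst_of_characteristic hH hS hHJE hq hchar
  exact ⟨fun t => (hp' t).differentiableAt, fun t => (hp' t).deriv⟩

/-- Jacobi's type-2 method: a C² solution `S` of the Hamilton–Jacobi equation yields, via the
method of characteristics (with momentum `p(t) = ∇_q S(q(t),t)`), solutions of Hamilton's
equations of motion: `p` is differentiable and `p'(t) = −∂H/∂q (q(t), p(t), t)`. -/
theorem jacobi_characteristics_solve_hamiltons_equations
    (n : ℕ) (hn : 1 ≤ n)
    (H : EuclideanSpace ℝ (Fin n) × EuclideanSpace ℝ (Fin n) × ℝ → ℝ)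
    (hH : ContDiff ℝ 1 H)
    (S : EuclideanSpace ℝ (Fin n) × ℝ → ℝ)
    (hS : ContDiff ℝ 2 S)
    (hHJE : ∀ (q : EuclideanSpace ℝ (Fin n)) (t : ℝ),
      deriv (fun τ => S (q, τ)) t + H (q, gradient (fun x => S (x, t)) q, t) = 0)
    (q : ℝ → EuclideanSpace ℝ (Fin n))
    (hq : Differentiable ℝ q)
    (hchar : ∀ t : ℝ,
      deriv q t
        = gradient (fun pp => H (q t, pp, t)) (gradient (fun x => S (x, t)) (q t)))
    (p : ℝ → EuclideanSpace ℝ (Fin n))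
    (hp : ∀ t : ℝ, p t = gradient (fun x => S (x, t)) (q t)) :
    Differentiable ℝ p ∧
      ∀ t : ℝ, deriv p t = -gradient (fun x => H (x, p t, t)) (q t) :=
  jacobi_characteristics_solve_hamiltons_equations_general n H hH S hS hHJE q hq hchar p hp
end

section
/- Let Sx, Sy, Sz be the spin-3/2 matrices in M₄(ℂ) (with ħ = 1): Sx = (1/2)·[[0,√3,0,0],[√3,0,2,0],[0,2,0,√3],[0,0,√3,0]], Sy = (1/2)·[[0,−√3·i,0,0],[√3·i,0,−2i,0],[0,2i,0,−√3·i],[0,0,√3·i,0]], Sz = diag(3/2, 1/2, −1/2, −3/2). Then there is no nonzero vector v ∈ ℂ⁴ that is simultaneously an eigenvector of Sx², of Sy², and of Sz². In particular, although every nonzero v is an eigenvector of Sx² + Sy² + Sz² with eigenvalue 15/4, there exists no basis of ℂ⁴ in which all three component squares have well-defined eigenvalues whose sum equals 15/4. -/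
open Matrix Complex

/-- The spin-3/2 `Sx` matrix (ħ = 1). -/
noncomputable def Sx : Matrix (Fin 4) (Fin 4) ℂ :=
  (1 / 2 : ℂ) •
    !![0, (Real.sqrt 3 : ℂ), 0, 0;
       (Real.sqrt 3 : ℂ), 0, 2, 0;
       0, 2, 0, (Real.sqrt 3 : ℂ);
       0, 0, (Real.sqrt 3 : ℂ), 0]

/-- The spin-3/2 `Sy` matrix (ħ = 1). -/
noncomputable def Sy : Matrix (Fin 4) (Fin 4) ℂ :=
  (1 / 2 : ℂ) •
    !![0, -(Real.sqrt 3 : ℂ) * Complex.I, 0, 0;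
       (Real.sqrt 3 : ℂ) * Complex.I, 0, -2 * Complex.I, 0;
       0, 2 * Complex.I, 0, -(Real.sqrt 3 : ℂ) * Complex.I;
       0, 0, (Real.sqrt 3 : ℂ) * Complex.I, 0]

/-- The spin-3/2 `Sz` matrix (ħ = 1). -/
noncomputable def Sz : Matrix (Fin 4) (Fin 4) ℂ :=
  !![(3 / 2 : ℂ), 0, 0, 0;
     0, (1 / 2 : ℂ), 0, 0;
     0, 0, (-(1 / 2) : ℂ), 0;
     0, 0, 0, (-(3 / 2) : ℂ)]

lemma hs3 : (Real.sqrt 3 : ℂ) * (Real.sqrt 3 : ℂ) = 3 := by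
  norm_cast
  rw [Real.mul_self_sqrt] <;> norm_num

lemma Sx_sq : Sx ^ 2 =
    !![3/4, 0, (Real.sqrt 3 : ℂ)/2, 0;
       0, 7/4, 0, (Real.sqrt 3 : ℂ)/2;
       (Real.sqrt 3 : ℂ)/2, 0, 7/4, 0;
       0, (Real.sqrt 3 : ℂ)/2, 0, 3/4] := by
  rw [pow_two, Sx]
  ext i j
  fin_cases i <;> fin_cases j <;>
    simp [mul_apply, Fin.sum_univ_four, Matrix.vecHead, Matrix.vecTail] <;>
    ring_nf <;> rw [sq, hs3] <;> norm_num

lemma Sy_sq : Sy ^ 2 =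
    !![3/4, 0, -(Real.sqrt 3 : ℂ)/2, 0;
       0, 7/4, 0, -(Real.sqrt 3 : ℂ)/2;
       -(Real.sqrt 3 : ℂ)/2, 0, 7/4, 0;
       0, -(Real.sqrt 3 : ℂ)/2, 0, 3/4] := by
  rw [pow_two, Sy]
  ext i j
  fin_cases i <;> fin_cases j <;>
    simp [mul_apply, Fin.sum_univ_four, Matrix.vecHead, Matrix.vecTail, Complex.I_mul_I] <;>
    ring_nf <;> simp [Complex.I_sq] <;> first | (rw [sq, hs3]; norm_num) | ring

lemma Sz_sq : Sz ^ 2 =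
    !![9/4, 0, 0, 0;
       0, 1/4, 0, 0;
       0, 0, 1/4, 0;
       0, 0, 0, 9/4] := by
  rw [pow_two, Sz]
  ext i j
  fin_cases i <;> fin_cases j <;>
    simp [mul_apply, Fin.sum_univ_four, Matrix.vecHead, Matrix.vecTail] <;> norm_num

lemma hsne : (Real.sqrt 3 : ℂ) ≠ 0 := by
  norm_cast
  positivity

/-- No nonzero vector of ℂ⁴ is simultaneously an eigenvector of `Sx²`, `Sy²` and `Sz²`,
even though every vector is an eigenvector of `Sx² + Sy² + Sz²` with eigenvalue `15/4`. -/
theorem spin_three_half_no_simultaneous_eigenvector :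
    (¬ ∃ v : Fin 4 → ℂ, v ≠ 0 ∧
        (∃ a : ℂ, (Sx ^ 2).mulVec v = a • v) ∧
        (∃ b : ℂ, (Sy ^ 2).mulVec v = b • v) ∧
        (∃ c : ℂ, (Sz ^ 2).mulVec v = c • v)) ∧
    (∀ v : Fin 4 → ℂ, (Sx ^ 2 + Sy ^ 2 + Sz ^ 2).mulVec v = (15 / 4 : ℂ) • v) := by
  constructor
  · rintro ⟨v, hv, ⟨a, ha⟩, -, ⟨c, hc⟩⟩
    rw [Sx_sq] at ha
    rw [Sz_sq] at hc
    have hx0 := congrFun ha 0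
    have hx1 := congrFun ha 1
    have hx2 := congrFun ha 2
    have hx3 := congrFun ha 3
    have hc0 := congrFun hc 0
    have hc1 := congrFun hc 1
    have hc2 := congrFun hc 2
    have hc3 := congrFun hc 3
    simp [mulVec, dotProduct, Fin.sum_univ_four] at hx0 hx1 hx2 hx3 hc0 hc1 hc2 hc3
    have h0 : v 0 = 0 := by
      rcases hc0 with h | h
      · have hv2 : v 2 = 0 := by
          rcases hc2 with h2 | h2
          · rw [← h] at h2; norm_num at h2
          · exact h2
        rw [hv2] at hx2; simp at hx2; exact hx2
      · exact h
    have h3 : v 3 = 0 := by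
      rcases hc3 with h | h
      · have hv1 : v 1 = 0 := by
          rcases hc1 with h1 | h1
          · rw [← h] at h1; norm_num at h1
          · exact h1
        rw [hv1] at hx1; simp at hx1; exact hx1
      · exact h
    have h2 : v 2 = 0 := by rw [h0] at hx0; simp at hx0; exact hx0
    have h1 : v 1 = 0 := by rw [h3] at hx3; simp at hx3; exact hx3
    apply hv
    funext i
    fin_cases i <;> assumption
  · intro v
    have hM : Sx ^ 2 + Sy ^ 2 + Sz ^ 2 = (15/4 : ℂ) • (1 : Matrix (Fin 4) (Fin 4) ℂ) := by
      rw [Sx_sq, Sy_sq, Sz_sq]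
      ext i j
      fin_cases i <;> fin_cases j <;> simp [Matrix.one_apply, Matrix.vecHead, Matrix.vecTail] <;> ring
    rw [hM, smul_mulVec, one_mulVec]
end
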